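/- Let X be a metric space, A a finite subset partitioned as A = A_1 ⊎ ⋯ ⊎ A_s with each A_i nonempty, and k ≥ 1 an integer. For each i let M_i ⊆ A_i be nonempty with |M_i| ≤ k and π_i : A_i → M_i an assignment; let π : A → M be the combined assignment with M = ∪_i M_i, let L = ∑_{j∈A} d(j, π(j)), and give each m ∈ M the weight w(m) = |{ j ∈ A : π(j) = m }|. Then there exists a nonempty K ⊆ M with |K| ≤ k such that ∑_{m∈M} w(m)·d(m,K) ≤ 2·( L + Cmed(A,k,0) ), where d(m,K) = min_{x∈K} d(m,x). -/

import Mathlib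

open Metric Finset

/-- The (k,t)-median cost of a finite point set `S`. -/
noncomputable def medCost {X : Type*} [MetricSpace X] [DecidableEq X]
    (S : Finset X) (k t : ℕ) : ℝ :=
  sInf { c : ℝ | ∃ K O : Finset X, K ⊆ S ∧ K.Nonempty ∧ K.card ≤ k ∧
    O ⊆ S ∧ O.card ≤ t ∧ c = ∑ p ∈ S \ O, infDist p (K : Set X) }

/-
Take an optimal `k`-median solution `K'` of `A` and move each of its centers to a nearest
preclustering center; the resulting `K ⊆ M` satisfies `d(m, K) ≤ 2 d(m, K')` for every `m ∈ M`,
since the nearest center `σ x` of `x ∈ K'` is at least as close to `x` as `m` is.  Weighting by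
`w` turns the sum over `M` into a sum over `A` of `d(π j, K') ≤ d(j, π j) + d(j, K')`.
-/

theorem Finset.sum_card_filter_mul {ι κ R : Type*} [DecidableEq κ] [NonAssocSemiring R]
    {s : Finset ι} {t : Finset κ} {g : ι → κ} (h : ∀ i ∈ s, g i ∈ t) (f : κ → R) :
    ∑ j ∈ t, (#{i ∈ s | g i = j} : R) * f j = ∑ i ∈ s, f (g i) := by
  rw [← sum_fiberwise_of_maps_to' h]
  simp only [sum_const, nsmul_eq_mul]

namespace Metric

variable {X : Type*} [PseudoMetricSpace X]

theorem infDist_image_le_two_mul {M K : Set X} {σ : X → X}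
    (hσ : ∀ x, ∀ m ∈ M, dist x (σ x) ≤ dist x m) {m : X} (hm : m ∈ M) :
    infDist m (σ '' K) ≤ 2 * infDist m K := by
  rcases K.eq_empty_or_nonempty with rfl | hK
  · simp
  rw [← div_le_iff₀' two_pos, le_infDist hK]
  intro x hx
  calc infDist m (σ '' K) / 2 ≤ (dist m x + dist x (σ x)) / 2 := by
        gcongr
        exact (infDist_le_dist_of_mem (Set.mem_image_of_mem σ hx)).trans (dist_triangle _ _ _)
    _ ≤ dist m x := by linarith [hσ x m hm, dist_comm x m]

theorem exists_subset_infDist_le_two_mul [DecidableEq X] {M K' : Finset X}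
    (hM : M.Nonempty) (hK' : K'.Nonempty) :
    ∃ K ⊆ M, K.Nonempty ∧ K.card ≤ K'.card ∧
      ∀ m ∈ M, infDist m (K : Set X) ≤ 2 * infDist m (K' : Set X) := by
  choose σ hσM hσ using fun x : X => M.exists_min_image (dist x) hM
  refine ⟨K'.image σ, fun _ hx => ?_, hK'.image σ, card_image_le, fun m hm => ?_⟩
  · obtain ⟨y, -, rfl⟩ := mem_image.mp hx
    exact hσM y
  · rw [coe_image]
    exact infDist_image_le_two_mul hσ hm

theorem sum_infDist_comp_le (A : Finset X) (π : X → X) (K : Set X) :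
    ∑ j ∈ A, infDist (π j) K ≤ ∑ j ∈ A, dist j (π j) + ∑ j ∈ A, infDist j K := by
  rw [← sum_add_distrib]
  gcongr with j
  linarith [infDist_le_infDist_add_dist (x := π j) (y := j) (s := K), dist_comm j (π j)]

end Metric

theorem exists_medCost_eq {X : Type*} [MetricSpace X] [DecidableEq X] {S : Finset X}
    (hS : S.Nonempty) {k : ℕ} (hk : 1 ≤ k) (t : ℕ) :
    ∃ K O : Finset X, K ⊆ S ∧ K.Nonempty ∧ K.card ≤ k ∧ O ⊆ S ∧ O.card ≤ t ∧
      medCost S k t = ∑ p ∈ S \ O, infDist p (K : Set X) := by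
  set F := {K ∈ S.powerset | K.Nonempty ∧ K.card ≤ k} ×ˢ {O ∈ S.powerset | O.card ≤ t}
  obtain ⟨a, ha⟩ := hS
  have hF : F.Nonempty := ⟨({a}, ∅), by simp [F, ha, hk]⟩
  obtain ⟨⟨K, O⟩, hKO, hmin⟩ :=
    F.exists_min_image (fun KO => ∑ p ∈ S \ KO.2, infDist p (KO.1 : Set X)) hF
  simp only [F, mem_product, mem_filter, mem_powerset] at hKO
  refine ⟨K, O, hKO.1.1, hKO.1.2.1, hKO.1.2.2, hKO.2.1, hKO.2.2, IsLeast.csInf_eq ?_⟩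
  refine ⟨⟨K, O, hKO.1.1, hKO.1.2.1, hKO.1.2.2, hKO.2.1, hKO.2.2, rfl⟩, ?_⟩
  rintro c ⟨K', O', hK'S, hK'ne, hK'k, hO'S, hO't, rfl⟩
  exact hmin (K', O') (by simp [F, hK'S, hK'ne, hK'k, hO'S, hO't])

theorem exists_weighted_kmedian_solution_general {X : Type*} [MetricSpace X] [DecidableEq X]
    {s : ℕ} (hs : 0 < s) (𝒜 : Fin s → Finset X)
    (hne : ∀ i, (𝒜 i).Nonempty)
    (A : Finset X) (hA : A = Finset.univ.biUnion 𝒜)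
    (k : ℕ) (hk : 1 ≤ k)
    (Mi : Fin s → Finset X)
    (hMine : ∀ i, (Mi i).Nonempty)
    (π : X → X) (hπ : ∀ i, ∀ j ∈ 𝒜 i, π j ∈ Mi i)
    (M : Finset X) (hM : M = Finset.univ.biUnion Mi)
    (L : ℝ) (hL : L = ∑ j ∈ A, dist j (π j))
    (w : X → ℝ) (hw : ∀ m, w m = ((A.filter fun j => π j = m).card : ℝ)) :
    ∃ K : Finset X, K ⊆ M ∧ K.Nonempty ∧ K.card ≤ k ∧
      ∑ m ∈ M, w m * infDist m (K : Set X) ≤ 2 * (L + medCost A k 0) := by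
  have i₀ : Fin s := ⟨0, hs⟩
  have hAne : A.Nonempty := hA ▸ biUnion_nonempty.mpr ⟨i₀, mem_univ _, hne i₀⟩
  have hMne : M.Nonempty := hM ▸ biUnion_nonempty.mpr ⟨i₀, mem_univ _, hMine i₀⟩
  have hπM : ∀ j ∈ A, π j ∈ M := by
    simp only [hA, hM, mem_biUnion, mem_univ, true_and]
    exact fun j ⟨i, hj⟩ => ⟨i, hπ i j hj⟩
  obtain ⟨K', O, -, hK'ne, hK'k, -, hO, hcost⟩ := exists_medCost_eq hAne hk 0
  rw [card_eq_zero.mp (Nat.le_zero.mp hO), sdiff_empty] at hcost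
  obtain ⟨K, hKM, hKne, hKK', hK⟩ := exists_subset_infDist_le_two_mul hMne hK'ne
  refine ⟨K, hKM, hKne, hKK'.trans hK'k, ?_⟩
  calc ∑ m ∈ M, w m * infDist m (K : Set X)
      ≤ ∑ m ∈ M, w m * (2 * infDist m (K' : Set X)) := by
        gcongr with m hm
        · rw [hw]; positivity
        · exact hK m hm
    _ = 2 * ∑ j ∈ A, infDist (π j) (K' : Set X) := by
        simp only [hw, mul_left_comm _ (2 : ℝ), ← mul_sum, sum_card_filter_mul hπM]
    _ ≤ 2 * (L + medCost A k 0) := by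
        rw [hL, hcost]
        gcongr
        exact sum_infDist_comp_le A π _

/-- Theorem 2.1(i): there exists a weighted k-median solution on the preclustering
centers of cost at most `2(L + Cmed(A,k,0))`. -/
theorem exists_weighted_kmedian_solution {X : Type*} [MetricSpace X] [DecidableEq X]
    {s : ℕ} (hs : 0 < s) (𝒜 : Fin s → Finset X)
    (hdisj : ∀ i j, i ≠ j → Disjoint (𝒜 i) (𝒜 j))
    (hne : ∀ i, (𝒜 i).Nonempty)
    (A : Finset X) (hA : A = Finset.univ.biUnion 𝒜)
    (k : ℕ) (hk : 1 ≤ k)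
    (Mi : Fin s → Finset X) (hMisub : ∀ i, Mi i ⊆ 𝒜 i)
    (hMine : ∀ i, (Mi i).Nonempty) (hMicard : ∀ i, (Mi i).card ≤ k)
    (π : X → X) (hπ : ∀ i, ∀ j ∈ 𝒜 i, π j ∈ Mi i)
    (M : Finset X) (hM : M = Finset.univ.biUnion Mi)
    (L : ℝ) (hL : L = ∑ j ∈ A, dist j (π j))
    (w : X → ℝ) (hw : ∀ m, w m = ((A.filter fun j => π j = m).card : ℝ)) :
    ∃ K : Finset X, K ⊆ M ∧ K.Nonempty ∧ K.card ≤ k ∧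
      ∑ m ∈ M, w m * infDist m (K : Set X) ≤ 2 * (L + medCost A k 0) :=
  exists_weighted_kmedian_solution_general hs 𝒜 hne A hA k hk Mi hMine π hπ M hM L hL w hw
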